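/- For k ≥ 1 define f_k : (0,∞) → ℝ by f_k(R) = √k / √(4/R² + log R² + k) for R > e^{-k/2} and f_k(R) = R√k/2 for 0 < R ≤ e^{-k/2}. Then sup_{R > e^{-k/2}} f_k(R) = √k/√(1 + log 4 + k), sup_{0 < R ≤ e^{-k/2}} f_k(R) = √k/(2e^{k/2}), and hence sup_{R>0} f_k(R) → 1 as k → ∞. -/

import Mathlib

/-!
On the upper branch, `4/R² + log R² ≥ 1 + log 4` is `log y ≤ y - 1` at `y = 4/R²`, with
equality at `R = 2`. The lower branch `R√k/2` increases up to `R = e^{-k/2}`, and there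
`√(1 + log 4 + k) ≤ 2 e^{k/2}` keeps it below the upper supremum. Finally
`√k / √(c + k) = √(k / (k + c)) → 1`.
-/

open Real Filter Topology

noncomputable def zygmundProfile (k R : ℝ) : ℝ :=
  if exp (-k / 2) < R then √k / √(4 / R ^ 2 + log (R ^ 2) + k) else R * √k / 2

lemma one_add_log_four_le {R : ℝ} (hR : 0 < R) : 1 + log 4 ≤ 4 / R ^ 2 + log (R ^ 2) := by
  have h := log_le_sub_one_of_pos (show 0 < 4 / R ^ 2 by positivity)
  rw [log_div (by norm_num) (by positivity)] at h
  linarith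

lemma sqrt_one_add_log_four_add_le {k : ℝ} (hk : 0 ≤ k) :
    √(1 + log 4 + k) ≤ 2 * exp (k / 2) := by
  have hlog4 : log 4 ≤ 3 := by linarith [log_le_sub_one_of_pos (show (0 : ℝ) < 4 by norm_num)]
  have hexp : k / 2 + 1 ≤ exp (k / 2) := add_one_le_exp _
  rw [sqrt_le_left (by positivity)]
  nlinarith

lemma exp_neg_div_two_lt_two {k : ℝ} (hk : 0 ≤ k) : exp (-k / 2) < 2 := by
  linarith [exp_le_one_iff.mpr (show -k / 2 ≤ 0 by linarith)]

lemma exp_neg_div_two_mul_div_two (k x : ℝ) : exp (-k / 2) * x / 2 = x / (2 * exp (k / 2)) := by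
  rw [neg_div, exp_neg]
  ring

lemma tendsto_sqrt_natCast_div_sqrt_add (c : ℝ) :
    Tendsto (fun k : ℕ => √k / √(c + k)) atTop (𝓝 1) := by
  have h := ((continuous_sqrt.tendsto 1).comp (tendsto_natCast_div_add_atTop c))
  rw [sqrt_one] at h
  refine h.congr fun k => ?_
  simp only [Function.comp_apply, sqrt_div (Nat.cast_nonneg k), add_comm]

namespace zygmundProfile

variable {k : ℝ}

lemma le_of_exp_lt (hk : 0 ≤ k) {R : ℝ} (hR : exp (-k / 2) < R) :
    zygmundProfile k R ≤ √k / √(1 + log 4 + k) := by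
  have hRpos : 0 < R := (exp_pos _).trans hR
  rw [zygmundProfile, if_pos hR]
  have hpos : 0 < 1 + log 4 + k := by linarith [log_nonneg (show (1 : ℝ) ≤ 4 by norm_num)]
  exact div_le_div_of_nonneg_left (sqrt_nonneg _) (sqrt_pos.2 hpos)
    (sqrt_le_sqrt (by linarith [one_add_log_four_le hRpos]))

lemma le_of_le_exp {R : ℝ} (hR : R ≤ exp (-k / 2)) :
    zygmundProfile k R ≤ √k / (2 * exp (k / 2)) := by
  rw [zygmundProfile, if_neg hR.not_gt, ← exp_neg_div_two_mul_div_two]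
  gcongr

lemma apply_two (hk : 0 ≤ k) : zygmundProfile k 2 = √k / √(1 + log 4 + k) := by
  rw [zygmundProfile, if_pos (exp_neg_div_two_lt_two hk)]
  norm_num

lemma apply_exp_neg : zygmundProfile k (exp (-k / 2)) = √k / (2 * exp (k / 2)) := by
  rw [zygmundProfile, if_neg (lt_irrefl _), exp_neg_div_two_mul_div_two]

lemma le_apply_two (hk : 0 ≤ k) {R : ℝ} : zygmundProfile k R ≤ zygmundProfile k 2 := by
  rw [apply_two hk]
  by_cases hR : exp (-k / 2) < R
  · exact le_of_exp_lt hk hR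
  · calc zygmundProfile k R ≤ √k / (2 * exp (k / 2)) := le_of_le_exp (not_lt.mp hR)
      _ ≤ √k / √(1 + log 4 + k) := by
        gcongr
        exact sqrt_one_add_log_four_add_le hk

variable {g : ℝ → ℝ} (hg : ∀ R, 0 < R → g R = zygmundProfile k R)
include hg

lemma isGreatest_of_exp_lt (hk : 0 ≤ k) :
    IsGreatest {y | ∃ R, exp (-k / 2) < R ∧ y = g R} (√k / √(1 + log 4 + k)) := by
  refine ⟨⟨2, exp_neg_div_two_lt_two hk, by rw [hg 2 two_pos, apply_two hk]⟩, ?_⟩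
  rintro _ ⟨R, hR, rfl⟩
  rw [hg R ((exp_pos _).trans hR)]
  exact le_of_exp_lt hk hR

lemma isGreatest_of_le_exp :
    IsGreatest {y | ∃ R, 0 < R ∧ R ≤ exp (-k / 2) ∧ y = g R} (√k / (2 * exp (k / 2))) := by
  refine ⟨⟨_, exp_pos _, le_rfl, by rw [hg _ (exp_pos _), apply_exp_neg]⟩, ?_⟩
  rintro _ ⟨R, hRpos, hR, rfl⟩
  rw [hg R hRpos]
  exact le_of_le_exp hR

lemma isGreatest (hk : 0 ≤ k) :
    IsGreatest {y | ∃ R, 0 < R ∧ y = g R} (√k / √(1 + log 4 + k)) := by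
  refine ⟨⟨2, two_pos, by rw [hg 2 two_pos, apply_two hk]⟩, ?_⟩
  rintro _ ⟨R, hRpos, rfl⟩
  rw [hg R hRpos, ← apply_two hk]
  exact le_apply_two hk

end zygmundProfile

theorem optimality_function_sup
    (f : ℕ → ℝ → ℝ)
    (hf : ∀ k : ℕ, 1 ≤ k → ∀ R : ℝ, 0 < R →
      f k R = if Real.exp (-(k : ℝ) / 2) < R then
          Real.sqrt (k : ℝ) / Real.sqrt (4 / R ^ 2 + Real.log (R ^ 2) + (k : ℝ))
        else R * Real.sqrt (k : ℝ) / 2) :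
    (∀ k : ℕ, 1 ≤ k →
      sSup {y : ℝ | ∃ R : ℝ, Real.exp (-(k : ℝ) / 2) < R ∧ y = f k R} =
        Real.sqrt (k : ℝ) / Real.sqrt (1 + Real.log 4 + (k : ℝ))) ∧
    (∀ k : ℕ, 1 ≤ k →
      sSup {y : ℝ | ∃ R : ℝ, 0 < R ∧ R ≤ Real.exp (-(k : ℝ) / 2) ∧ y = f k R} =
        Real.sqrt (k : ℝ) / (2 * Real.exp ((k : ℝ) / 2))) ∧
    Tendsto (fun k : ℕ => sSup {y : ℝ | ∃ R : ℝ, 0 < R ∧ y = f k R})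
      atTop (nhds 1) := by
  refine ⟨fun k hk => (zygmundProfile.isGreatest_of_exp_lt (hf k hk) k.cast_nonneg).csSup_eq,
    fun k hk => (zygmundProfile.isGreatest_of_le_exp (hf k hk)).csSup_eq, ?_⟩
  refine (tendsto_sqrt_natCast_div_sqrt_add (1 + log 4)).congr' ?_
  filter_upwards [eventually_ge_atTop 1] with k hk
  exact ((zygmundProfile.isGreatest (hf k hk) k.cast_nonneg).csSup_eq).symm
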